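/- arXiv:1508.06660 — 3 statements merged into one kernel-verified Lean document; each statement's English description precedes it below -/
import Mathlib

section
/- (Order of the extreme-problem value, analytic ellipsoids.) Let σ > 0, c_k = exp(2πσ|k|) for k ∈ ℤ, and define v(r) ≥ 0 by v(r)² = (1/2) inf{ Σ_{k∈ℤ} θ_k⁴ : θ ∈ l²(ℤ), Σ_k c_k² θ_k² ≤ 1, Σ_k θ_k² ≥ r² }. Then, as r → 0, v(r) ≍ r² / log^{1/2}(1/r), i.e. there exist constants 0 < a < A < ∞ and r₀ > 0 such that a r²/√(log(1/r)) ≤ v(r) ≤ A r²/√(log(1/r)) for all 0 < r < r₀. (Equivalently, u_ε(r) = ε^{−2} v(r) ≍ (r/ε)² log^{−1/2}(1/r).) -/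
open Filter Real Set
open scoped Topology

noncomputable section

/-- The ellipsoid shell `Θ_σ(r) = {θ ∈ l²(ℤ) : Σ c_k²θ_k² ≤ 1, Σ θ_k² ≥ r²}`. -/
def Theta (c : ℤ → ℝ) (r : ℝ) : Set (ℤ → ℝ) :=
  {θ | Summable (fun k => (c k) ^ 2 * (θ k) ^ 2) ∧ (∑' k, (c k) ^ 2 * (θ k) ^ 2) ≤ 1 ∧
       Summable (fun k => (θ k) ^ 2) ∧ r ^ 2 ≤ ∑' k, (θ k) ^ 2}

/-- The values `Σ_k θ_k⁴` over the ellipsoid shell. -/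
def quartSet (c : ℤ → ℝ) (r : ℝ) : Set ℝ :=
  (fun θ : ℤ → ℝ => ∑' k, (θ k) ^ 4) '' Theta c r

/-- `v(r) ≥ 0` with `v(r)² = (1/2) inf_{θ ∈ Θ_σ(r)} Σ_k θ_k⁴`. -/
def vVal (c : ℤ → ℝ) (r : ℝ) : ℝ := Real.sqrt (2⁻¹ * sInf (quartSet c r))

/-- Sobolev semi-axes `c_k = (2π|k|)^{2σ}`. -/
def cSob (σ : ℝ) (k : ℤ) : ℝ := (2 * π * |(k : ℝ)|) ^ (2 * σ)

/-- Analytic semi-axes `c_k = exp(2πσ|k|)`. -/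
def cAna (σ : ℝ) (k : ℤ) : ℝ := Real.exp (2 * π * σ * |(k : ℝ)|)

/-- The index set `{k ∈ ℤ : 1 ≤ |k| ≤ K}`. -/
def shell (K : ℕ) : Finset ℤ := (Finset.Icc (-(K : ℤ)) (K : ℤ)).erase 0

/-- `K = ⌊(2πσ)⁻¹ log(1/r)⌋` (analytic case). -/
def KAna (σ r : ℝ) : ℕ := ⌊(2 * π * σ)⁻¹ * Real.log (1 / r)⌋₊

/-- The Euler beta function `B(a,b) = Γ(a)Γ(b)/Γ(a+b)`. -/
def eulerBeta (a b : ℝ) : ℝ := Real.Gamma a * Real.Gamma b / Real.Gamma (a + b)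

/-- The sharp constant `C(σ)` of Sobolev signal detection. -/
def sobConst (σ : ℝ) : ℝ :=
  2 * σ * ((1 + 1 / (4 * σ)) * (1 + 4 * σ) ^ (1 / (2 * σ)) *
    (eulerBeta (1 / (2 * σ)) 2) ^ (1 / σ))⁻¹

end

/-- Fourth powers are summable if squares are. -/
lemma summable_fourth_of_sq {θ : ℤ → ℝ} (h : Summable fun k => θ k ^ 2) :
    Summable fun k => θ k ^ 4 := by
  refine Summable.of_nonneg_of_le (fun k => by positivity) (fun k => ?_)
    (h.mul_left (∑' k, θ k ^ 2))
  have h1 : θ k ^ 2 ≤ ∑' j, θ j ^ 2 := Summable.le_tsum h k (fun j _ => by positivity)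
  have h2 : 0 ≤ θ k ^ 2 := sq_nonneg _
  nlinarith

/-- Cardinality of the integer interval. -/
lemma card_Icc_int (n : ℕ) : ((Finset.Icc (-(n : ℤ)) (n : ℤ)).card : ℝ) = 2 * (n : ℝ) + 1 := by
  rw [Int.card_Icc]
  have : ((n : ℤ) + 1 - -(n : ℤ)).toNat = 2 * n + 1 := by omega
  rw [this]; push_cast; ring

lemma cAna_sq (σ : ℝ) (k : ℤ) :
    cAna σ k ^ 2 = Real.exp (2 * (2 * π * σ * |(k : ℝ)|)) := by
  rw [cAna, sq, ← Real.exp_add]; ring_nf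

lemma aux_sq_half {r : ℝ} (h0 : 0 ≤ r) (h : r ≤ 1 / 2) : r ^ 2 ≤ 1 / 2 := by nlinarith

lemma aux_exp_inv_lt_half : Real.exp (-1) < 1 / 2 := by
  rw [Real.exp_neg, inv_lt_comm₀ (Real.exp_pos 1) (by norm_num)]
  have := Real.add_one_lt_exp (x := 1) (by norm_num)
  norm_num
  linarith

set_option maxHeartbeats 1000000 in
/-- Order of the extreme-problem value, analytic ellipsoids:
`v(r) ≍ r² / √(log(1/r))` as `r → 0`. -/
theorem order_extreme_value_analytic (σ : ℝ) (hσ : 0 < σ) :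
    ∃ a A r₀ : ℝ, 0 < a ∧ a < A ∧ 0 < r₀ ∧
      ∀ r : ℝ, 0 < r → r < r₀ →
        a * (r ^ 2 / Real.sqrt (Real.log (1 / r))) ≤ vVal (cAna σ) r ∧
        vVal (cAna σ) r ≤ A * (r ^ 2 / Real.sqrt (Real.log (1 / r))) := by
  have hπ : (0 : ℝ) < π := Real.pi_pos
  have hπσ : (0 : ℝ) < 2 * π * σ := by positivity
  set D : ℝ := 2 / (π * σ) + 3 with hD
  have hDpos : 0 < D := by positivity
  set B : ℝ := (4 * D)⁻¹ with hBdef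
  have hBpos : 0 < B := by positivity
  set a₀ : ℝ := Real.sqrt (B / 2) with ha₀
  set A₀ : ℝ := Real.sqrt (π * σ) with hA₀
  have ha₀pos : 0 < a₀ := Real.sqrt_pos.2 (by positivity)
  have hA₀pos : 0 < A₀ := Real.sqrt_pos.2 (by positivity)
  refine ⟨min a₀ (A₀ / 2), A₀, Real.exp (-(2 * π * σ + 1)),
    lt_min ha₀pos (by positivity), ?_, Real.exp_pos _, ?_⟩
  · exact lt_of_le_of_lt (min_le_right _ _) (by linarith)
  intro r hr hrr₀
  set L : ℝ := Real.log (1 / r) with hLdef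
  have hLr : L = -Real.log r := by rw [hLdef, one_div, Real.log_inv]
  have hlogr : Real.log r < -(2 * π * σ + 1) := by
    calc Real.log r < Real.log (Real.exp (-(2 * π * σ + 1))) := Real.log_lt_log hr hrr₀
    _ = -(2 * π * σ + 1) := Real.log_exp _
  have hL : 2 * π * σ + 1 < L := by rw [hLr]; linarith
  have hLpos : 0 < L := by linarith
  have hL1 : 1 ≤ L := by linarith
  have hrhalf : r < 1 / 2 := by
    have h1 : r < Real.exp (-1) :=
      hrr₀.trans_le (Real.exp_le_exp.2 (by linarith))
    exact h1.trans aux_exp_inv_lt_half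
  have hrsq : r ^ 2 ≤ 1 / 2 := aux_sq_half hr.le hrhalf.le
  -- upper bound construction
  set K : ℕ := KAna σ r with hKdef
  have hKfl : (K : ℝ) ≤ (2 * π * σ)⁻¹ * L := by
    rw [hKdef, KAna]; exact Nat.floor_le (by positivity)
  have hKle : 2 * π * σ * (K : ℝ) ≤ L := by
    have h1 := mul_le_mul_of_nonneg_left hKfl hπσ.le
    calc 2 * π * σ * (K : ℝ) ≤ 2 * π * σ * ((2 * π * σ)⁻¹ * L) := h1
    _ = L := by field_simp
  have hKup : (2 * π * σ)⁻¹ * L < (K : ℝ) + 1 := by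
    rw [hKdef, KAna]; exact Nat.lt_floor_add_one _
  have h2K : L / (2 * π * σ) ≤ 2 * (K : ℝ) + 1 := by
    have hd1 : 1 ≤ L / (2 * π * σ) := (one_le_div hπσ).2 (by linarith)
    rw [div_eq_inv_mul] at hd1 ⊢
    linarith
  have hden : (0 : ℝ) < 2 * (K : ℝ) + 1 := by positivity
  set s : Finset ℤ := Finset.Icc (-(K : ℤ)) (K : ℤ) with hs
  have hcard : (s.card : ℝ) = 2 * (K : ℝ) + 1 := card_Icc_int K
  set θc : ℤ → ℝ := fun k => if k ∈ s then r / Real.sqrt (2 * (K : ℝ) + 1) else 0 with hθc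
  have hθc_zero : ∀ k ∉ s, θc k = 0 := fun k hk => by simp [hθc, if_neg hk]
  have hθc_sq : ∀ k ∈ s, θc k ^ 2 = r ^ 2 / (2 * (K : ℝ) + 1) := by
    intro k hk
    simp only [hθc, if_pos hk]
    rw [div_pow, Real.sq_sqrt hden.le]
  have habs : ∀ k ∈ s, |(k : ℝ)| ≤ (K : ℝ) := by
    intro k hk
    rw [hs, Finset.mem_Icc] at hk
    rw [abs_le]
    constructor <;> [exact_mod_cast hk.1; exact_mod_cast hk.2]
  have hexpK : Real.exp (2 * π * σ * (K : ℝ)) ≤ 1 / r := by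
    calc Real.exp (2 * π * σ * (K : ℝ)) ≤ Real.exp L := Real.exp_le_exp.2 hKle
    _ = 1 / r := by rw [hLdef, Real.exp_log (by positivity)]
  -- the three tsum computations for θc
  have hsum_sq : ∑' k, θc k ^ 2 = r ^ 2 := by
    rw [tsum_eq_sum (s := s) (fun k hk => by rw [hθc_zero k hk]; ring)]
    rw [Finset.sum_congr rfl hθc_sq, Finset.sum_const, nsmul_eq_mul, hcard]
    field_simp
  have hsum_quart : ∑' k, θc k ^ 4 = r ^ 4 / (2 * (K : ℝ) + 1) := by
    rw [tsum_eq_sum (s := s) (fun k hk => by rw [hθc_zero k hk]; ring)]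
    have h1 : ∀ k ∈ s, θc k ^ 4 = (r ^ 2 / (2 * (K : ℝ) + 1)) ^ 2 := by
      intro k hk
      rw [show θc k ^ 4 = (θc k ^ 2) ^ 2 by ring, hθc_sq k hk]
    rw [Finset.sum_congr rfl h1, Finset.sum_const, nsmul_eq_mul, hcard]
    field_simp
  have hsum_constr : ∑' k, cAna σ k ^ 2 * θc k ^ 2 ≤ 1 := by
    rw [tsum_eq_sum (s := s) (fun k hk => by rw [hθc_zero k hk]; ring)]
    have hterm : ∀ k ∈ s, cAna σ k ^ 2 * θc k ^ 2 ≤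
        Real.exp (2 * π * σ * (K : ℝ)) ^ 2 * (r ^ 2 / (2 * (K : ℝ) + 1)) := by
      intro k hk
      rw [hθc_sq k hk]
      apply mul_le_mul_of_nonneg_right _ (by positivity)
      rw [cAna]
      apply pow_le_pow_left₀ (Real.exp_nonneg _)
      exact Real.exp_le_exp.2 (mul_le_mul_of_nonneg_left (habs k hk) hπσ.le)
    calc ∑ k ∈ s, cAna σ k ^ 2 * θc k ^ 2
        ≤ ∑ _k ∈ s, Real.exp (2 * π * σ * (K : ℝ)) ^ 2 * (r ^ 2 / (2 * (K : ℝ) + 1)) :=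
          Finset.sum_le_sum hterm
    _ = Real.exp (2 * π * σ * (K : ℝ)) ^ 2 * r ^ 2 := by
          rw [Finset.sum_const, nsmul_eq_mul, hcard]; field_simp
    _ ≤ (1 / r) ^ 2 * r ^ 2 := by
          apply mul_le_mul_of_nonneg_right _ (by positivity)
          exact pow_le_pow_left₀ (Real.exp_nonneg _) hexpK 2
    _ = 1 := by field_simp
  have hmem : θc ∈ Theta (cAna σ) r := by
    refine ⟨summable_of_ne_finset_zero (s := s)
      (fun k hk => by rw [hθc_zero k hk]; ring), hsum_constr,
      summable_of_ne_finset_zero (s := s)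
      (fun k hk => by rw [hθc_zero k hk]; ring), hsum_sq.ge⟩
  have hqmem : r ^ 4 / (2 * (K : ℝ) + 1) ∈ quartSet (cAna σ) r := ⟨θc, hmem, hsum_quart⟩
  -- lower bound for every element of quartSet
  set M : ℕ := ⌈L / (π * σ)⌉₊ with hMdef
  have hMge : L / (π * σ) ≤ (M : ℝ) := Nat.le_ceil _
  have hMle : (M : ℝ) ≤ L / (π * σ) + 1 := (Nat.ceil_lt_add_one (by positivity)).le
  have hMden : (0 : ℝ) < 2 * (M : ℝ) + 1 := by positivity
  have hlower : ∀ x ∈ quartSet (cAna σ) r, r ^ 4 / (4 * (2 * (M : ℝ) + 1)) ≤ x := by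
    rintro x ⟨θ, ⟨hsum1, hle1, hsum2, hge2⟩, rfl⟩
    set t : Finset ℤ := Finset.Icc (-(M : ℤ)) (M : ℤ) with ht
    have hcardt : (t.card : ℝ) = 2 * (M : ℝ) + 1 := card_Icc_int M
    have h4sum : Summable fun k => θ k ^ 4 := summable_fourth_of_sq hsum2
    -- tail of constraint sum is ≤ 1
    have hcompl1 : ∑' (k : ↑((t : Set ℤ)ᶜ)), cAna σ (k : ℤ) ^ 2 * θ (k : ℤ) ^ 2 ≤ 1 := by
      have h1 := Summable.sum_add_tsum_compl (s := t) hsum1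
      have h2 : 0 ≤ ∑ k ∈ t, cAna σ k ^ 2 * θ k ^ 2 :=
        Finset.sum_nonneg fun k _ => by positivity
      linarith
    -- tail of the square sum is small
    have htail : ∑' (k : ↑((t : Set ℤ)ᶜ)), θ (k : ℤ) ^ 2 ≤
        Real.exp (-(4 * π * σ * ((M : ℝ) + 1))) := by
      have hterm : ∀ k : ↑((t : Set ℤ)ᶜ), θ (k : ℤ) ^ 2 ≤
          Real.exp (-(4 * π * σ * ((M : ℝ) + 1))) * (cAna σ (k : ℤ) ^ 2 * θ (k : ℤ) ^ 2) := by
        rintro ⟨k, hk⟩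
        have hk' : ¬(-(M : ℤ) ≤ k ∧ k ≤ (M : ℤ)) := by
          simpa [ht, Finset.mem_Icc] using hk
        have habsk : (M : ℝ) + 1 ≤ |(k : ℝ)| := by
          have hk2 : ((M : ℤ) + 1 ≤ k) ∨ (k ≤ -((M : ℤ) + 1)) := by omega
          rcases hk2 with h | h
          · refine le_abs.2 (Or.inl ?_)
            exact_mod_cast (by exact_mod_cast h : ((M : ℤ) + 1 : ℤ) ≤ k)
          · refine le_abs.2 (Or.inr ?_)
            have : ((k : ℝ)) ≤ -((M : ℝ) + 1) := by exact_mod_cast h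
            linarith
        have hone : (1 : ℝ) ≤ Real.exp (-(4 * π * σ * ((M : ℝ) + 1))) * cAna σ k ^ 2 := by
          rw [cAna_sq, ← Real.exp_add]
          apply Real.one_le_exp
          have h5 := mul_le_mul_of_nonneg_left habsk
            (show (0:ℝ) ≤ 4 * π * σ by positivity)
          linarith
        calc θ (k : ℤ) ^ 2 = 1 * θ (k : ℤ) ^ 2 := (one_mul _).symm
        _ ≤ Real.exp (-(4 * π * σ * ((M : ℝ) + 1))) * cAna σ k ^ 2 * θ (k : ℤ) ^ 2 :=
            mul_le_mul_of_nonneg_right hone (sq_nonneg _)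
        _ = Real.exp (-(4 * π * σ * ((M : ℝ) + 1))) * (cAna σ k ^ 2 * θ (k : ℤ) ^ 2) := by
            ring
      calc ∑' (k : ↑((t : Set ℤ)ᶜ)), θ (k : ℤ) ^ 2
          ≤ ∑' (k : ↑((t : Set ℤ)ᶜ)),
            Real.exp (-(4 * π * σ * ((M : ℝ) + 1))) * (cAna σ (k : ℤ) ^ 2 * θ (k : ℤ) ^ 2) :=
            Summable.tsum_le_tsum hterm (hsum2.subtype _) ((Summable.subtype hsum1 _).mul_left _)
      _ = Real.exp (-(4 * π * σ * ((M : ℝ) + 1))) *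
            ∑' (k : ↑((t : Set ℤ)ᶜ)), cAna σ (k : ℤ) ^ 2 * θ (k : ℤ) ^ 2 := tsum_mul_left
      _ ≤ Real.exp (-(4 * π * σ * ((M : ℝ) + 1))) * 1 :=
            mul_le_mul_of_nonneg_left hcompl1 (Real.exp_nonneg _)
      _ = Real.exp (-(4 * π * σ * ((M : ℝ) + 1))) := mul_one _
    have hexp_small : Real.exp (-(4 * π * σ * ((M : ℝ) + 1))) ≤ r ^ 2 / 2 := by
      have h0 : 4 * L ≤ 4 * π * σ * ((M : ℝ) + 1) := by
        have h1 : L / (π * σ) ≤ (M : ℝ) + 1 := by linarith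
        have h2 := mul_le_mul_of_nonneg_left h1 (by positivity : (0:ℝ) ≤ 4 * π * σ)
        calc 4 * L = 4 * π * σ * (L / (π * σ)) := by field_simp
        _ ≤ 4 * π * σ * ((M : ℝ) + 1) := h2
      have h2 : Real.exp (-(4 * π * σ * ((M : ℝ) + 1))) ≤ Real.exp (-(4 * L)) :=
        Real.exp_le_exp.2 (by linarith)
      have h3 : Real.exp (-(4 * L)) = r ^ 4 := by
        rw [show -(4 * L) = ((4 : ℕ) : ℝ) * Real.log r by rw [hLr]; push_cast; ring,
          Real.exp_nat_mul, Real.exp_log hr]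
      have h4 : r ^ 4 ≤ r ^ 2 / 2 := by
        have h5 := mul_le_mul_of_nonneg_right hrsq (sq_nonneg r)
        calc r ^ 4 = r ^ 2 * r ^ 2 := by ring
        _ ≤ 1 / 2 * r ^ 2 := h5
        _ = r ^ 2 / 2 := by ring
      linarith
    have hhead : r ^ 2 / 2 ≤ ∑ k ∈ t, θ k ^ 2 := by
      have h1 := Summable.sum_add_tsum_compl (s := t) hsum2
      linarith
    -- Cauchy–Schwarz
    have hcs := Finset.sum_mul_sq_le_sq_mul_sq t (fun _ => (1 : ℝ)) (fun k => θ k ^ 2)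
    simp only [one_mul, one_pow, Finset.sum_const, nsmul_eq_mul, mul_one] at hcs
    have hcs' : (∑ k ∈ t, θ k ^ 2) ^ 2 ≤ (2 * (M : ℝ) + 1) * ∑ k ∈ t, (θ k ^ 2) ^ 2 := by
      calc (∑ k ∈ t, θ k ^ 2) ^ 2 ≤ (t.card : ℝ) * ∑ k ∈ t, (θ k ^ 2) ^ 2 := hcs
      _ = (2 * (M : ℝ) + 1) * ∑ k ∈ t, (θ k ^ 2) ^ 2 := by rw [hcardt]
    have hsum_le : ∑ k ∈ t, (θ k ^ 2) ^ 2 ≤ ∑' k, θ k ^ 4 := by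
      have h1 : ∀ k ∈ t, (θ k ^ 2) ^ 2 = θ k ^ 4 := fun k _ => by ring
      rw [Finset.sum_congr rfl h1]
      exact Summable.sum_le_tsum t (fun k _ => by positivity) h4sum
    have hsq : (r ^ 2 / 2) ^ 2 ≤ (∑ k ∈ t, θ k ^ 2) ^ 2 :=
      pow_le_pow_left₀ (by positivity) hhead 2
    have h5 : r ^ 4 / 4 ≤ (2 * (M : ℝ) + 1) * ∑' k, θ k ^ 4 := by
      have h6 := mul_le_mul_of_nonneg_left hsum_le hMden.le
      calc r ^ 4 / 4 = (r ^ 2 / 2) ^ 2 := by ring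
      _ ≤ (∑ k ∈ t, θ k ^ 2) ^ 2 := hsq
      _ ≤ (2 * (M : ℝ) + 1) * ∑ k ∈ t, (θ k ^ 2) ^ 2 := hcs'
      _ ≤ (2 * (M : ℝ) + 1) * ∑' k, θ k ^ 4 := h6
    rw [div_le_iff₀ (by positivity)]
    calc r ^ 4 = 4 * (r ^ 4 / 4) := by ring
    _ ≤ 4 * ((2 * (M : ℝ) + 1) * ∑' k, θ k ^ 4) := by linarith
    _ = (∑' k, θ k ^ 4) * (4 * (2 * (M : ℝ) + 1)) := by ring
  -- sInf bounds
  have hbdd : BddBelow (quartSet (cAna σ) r) := by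
    refine ⟨0, ?_⟩
    rintro x ⟨θ, _, rfl⟩
    exact tsum_nonneg fun k => by positivity
  have hne : (quartSet (cAna σ) r).Nonempty := ⟨_, hqmem⟩
  have hInf_le : sInf (quartSet (cAna σ) r) ≤ r ^ 4 / (2 * (K : ℝ) + 1) := csInf_le hbdd hqmem
  have hle_Inf : r ^ 4 / (4 * (2 * (M : ℝ) + 1)) ≤ sInf (quartSet (cAna σ) r) :=
    le_csInf hne hlower
  have hsqrtL : Real.sqrt (r ^ 4 / L) = r ^ 2 / Real.sqrt L := by
    rw [Real.sqrt_div (by positivity), show r ^ 4 = (r ^ 2) ^ 2 by ring,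
      Real.sqrt_sq (by positivity)]
  constructor
  · -- lower bound on vVal
    have key : B * (r ^ 4 / L) ≤ r ^ 4 / (4 * (2 * (M : ℝ) + 1)) := by
      have h2M : 2 * (M : ℝ) + 1 ≤ D * L := by
        have step1 : 2 * (M : ℝ) + 1 ≤ 2 * (L / (π * σ)) + 3 := by linarith
        have step2 : 2 * (L / (π * σ)) + 3 ≤ 2 * (L / (π * σ)) + 3 * L := by linarith
        have step3 : 2 * (L / (π * σ)) + 3 * L = D * L := by
          rw [hD]; field_simp
        exact step3 ▸ (step1.trans step2)
      have hBineq : B * (4 * (2 * (M : ℝ) + 1)) ≤ L := by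
        rw [hBdef, inv_mul_le_iff₀ (by positivity)]
        calc 4 * (2 * (M : ℝ) + 1) ≤ 4 * (D * L) := by linarith
        _ = 4 * D * L := by ring
      rw [le_div_iff₀ (by positivity)]
      calc B * (r ^ 4 / L) * (4 * (2 * (M : ℝ) + 1))
          = r ^ 4 / L * (B * (4 * (2 * (M : ℝ) + 1))) := by ring
      _ ≤ r ^ 4 / L * L := mul_le_mul_of_nonneg_left hBineq (by positivity)
      _ = r ^ 4 := div_mul_cancel₀ _ hLpos.ne'
    have hfinal : B / 2 * (r ^ 4 / L) ≤ 2⁻¹ * sInf (quartSet (cAna σ) r) := by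
      have h1 : B / 2 * (r ^ 4 / L) = 2⁻¹ * (B * (r ^ 4 / L)) := by ring
      rw [h1]
      have h2 := key.trans hle_Inf
      linarith
    calc min a₀ (A₀ / 2) * (r ^ 2 / Real.sqrt L)
        ≤ a₀ * (r ^ 2 / Real.sqrt L) :=
          mul_le_mul_of_nonneg_right (min_le_left _ _) (by positivity)
    _ = Real.sqrt (B / 2 * (r ^ 4 / L)) := by
        rw [Real.sqrt_mul (by positivity), hsqrtL, ha₀]
    _ ≤ Real.sqrt (2⁻¹ * sInf (quartSet (cAna σ) r)) := Real.sqrt_le_sqrt hfinal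
    _ = vVal (cAna σ) r := rfl
  · -- upper bound on vVal
    have key : 2⁻¹ * sInf (quartSet (cAna σ) r) ≤ π * σ * (r ^ 4 / L) := by
      have h1 : r ^ 4 / (2 * (K : ℝ) + 1) ≤ r ^ 4 / (L / (2 * π * σ)) :=
        div_le_div_of_nonneg_left (by positivity) (by positivity) h2K
      have h2 : r ^ 4 / (L / (2 * π * σ)) = 2 * π * σ * (r ^ 4 / L) := by
        field_simp
      calc 2⁻¹ * sInf (quartSet (cAna σ) r) ≤ 2⁻¹ * (r ^ 4 / (2 * (K : ℝ) + 1)) := by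
            linarith
      _ ≤ 2⁻¹ * (2 * π * σ * (r ^ 4 / L)) := by rw [← h2]; linarith
      _ = π * σ * (r ^ 4 / L) := by ring
    calc vVal (cAna σ) r = Real.sqrt (2⁻¹ * sInf (quartSet (cAna σ) r)) := rfl
    _ ≤ Real.sqrt (π * σ * (r ^ 4 / L)) := Real.sqrt_le_sqrt key
    _ = A₀ * (r ^ 2 / Real.sqrt L) := by
        rw [Real.sqrt_mul (by positivity), hsqrtL, hA₀]
end

section
/- (Near-extremal sequence for analytic ellipsoids.) Let σ > 0 and c_k = exp(2πσ|k|) for k ∈ ℤ. For r > 0 set K = ⌊(2πσ)^{−1} log(1/r)⌋ and define θ ∈ l²(ℤ) by θ_k² = r²/(2K) for 1 ≤ |k| ≤ K and θ_k = 0 otherwise. Then for all sufficiently small r > 0 (depending only on σ): θ ∈ Θ_σ(r), i.e. Σ_k c_k² θ_k² ≤ 1 and Σ_k θ_k² = r², and moreover Σ_k θ_k⁴ = r⁴/(2K). Consequently v(r)² ≤ r⁴/(4K) = O(r⁴/log(1/r)) as r → 0. -/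
open Filter Real Set
open scoped Topology

lemma shell_card (K : ℕ) : (shell K).card = 2 * K := by
  unfold shell
  rw [Finset.card_erase_of_mem (by simp), Int.card_Icc]
  omega

lemma abs_le_of_mem_shell {K : ℕ} {k : ℤ} (h : k ∈ shell K) : |(k : ℝ)| ≤ K := by
  simp only [shell, Finset.mem_erase, Finset.mem_Icc] at h
  have h1 : |k| ≤ (K : ℤ) := abs_le.mpr h.2
  calc |(k : ℝ)| = ((|k| : ℤ) : ℝ) := by push_cast; ring
  _ ≤ K := by exact_mod_cast h1

/-- Near-extremal sequence for analytic ellipsoids. -/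
theorem near_extremal_analytic (σ : ℝ) (hσ : 0 < σ) :
    ∃ r₀ > (0 : ℝ),
      (∀ r : ℝ, 0 < r → r < r₀ →
        (fun k : ℤ => if k ∈ shell (KAna σ r) then r / Real.sqrt (2 * KAna σ r) else 0)
            ∈ Theta (cAna σ) r ∧
        (∑' k : ℤ, ((if k ∈ shell (KAna σ r) then r / Real.sqrt (2 * KAna σ r) else 0) : ℝ) ^ 2)
            = r ^ 2 ∧
        (∑' k : ℤ, ((if k ∈ shell (KAna σ r) then r / Real.sqrt (2 * KAna σ r) else 0) : ℝ) ^ 4)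
            = r ^ 4 / (2 * KAna σ r) ∧
        vVal (cAna σ) r ^ 2 ≤ r ^ 4 / (4 * KAna σ r)) ∧
      ∃ C > (0 : ℝ), ∀ r : ℝ, 0 < r → r < r₀ →
        vVal (cAna σ) r ^ 2 ≤ C * (r ^ 4 / Real.log (1 / r)) := by
  have hπ : 0 < π := Real.pi_pos
  have h2πσ : 0 < 2 * π * σ := by positivity
  set r₀ := Real.exp (-(4 * π * σ)) with hr₀def
  have main : ∀ r : ℝ, 0 < r → r < r₀ →
      ((fun k : ℤ => if k ∈ shell (KAna σ r) then r / Real.sqrt (2 * KAna σ r) else 0)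
            ∈ Theta (cAna σ) r ∧
        (∑' k : ℤ, ((if k ∈ shell (KAna σ r) then r / Real.sqrt (2 * KAna σ r) else 0) : ℝ) ^ 2)
            = r ^ 2 ∧
        (∑' k : ℤ, ((if k ∈ shell (KAna σ r) then r / Real.sqrt (2 * KAna σ r) else 0) : ℝ) ^ 4)
            = r ^ 4 / (2 * KAna σ r) ∧
        vVal (cAna σ) r ^ 2 ≤ r ^ 4 / (4 * KAna σ r)) ∧
      vVal (cAna σ) r ^ 2 ≤ (π * σ) * (r ^ 4 / Real.log (1 / r)) := by
    intro r hr hrr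
    set K := KAna σ r with hKdef
    set v := r / Real.sqrt (2 * K) with hvdef
    set L := Real.log (1 / r) with hLdef
    -- basic log facts
    have hlog : 4 * π * σ < L := by
      rw [hLdef, Real.log_div one_ne_zero (ne_of_gt hr), Real.log_one]
      have h := Real.log_lt_log hr hrr
      rw [hr₀def, Real.log_exp] at h
      linarith
    have hL0 : 0 < L := by linarith
    have hx2 : (2 : ℝ) ≤ (2 * π * σ)⁻¹ * L := by
      have h := mul_le_mul_of_nonneg_left
        (le_of_lt (by linarith : 2 * (2 * π * σ) < L)) (le_of_lt (inv_pos.mpr h2πσ))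
      calc (2 : ℝ) = (2 * π * σ)⁻¹ * (2 * (2 * π * σ)) := by field_simp
      _ ≤ _ := h
    have hK2 : 2 ≤ K := by
      rw [hKdef, KAna, ← hLdef]
      exact Nat.le_floor (by exact_mod_cast hx2)
    have hK2' : (2 : ℝ) ≤ (K : ℝ) := by exact_mod_cast hK2
    have hK0 : (0 : ℝ) < K := by linarith
    have hKle : (K : ℝ) ≤ (2 * π * σ)⁻¹ * L := by
      rw [hKdef, KAna, ← hLdef]
      exact Nat.floor_le (by positivity)
    have hKge : (2 * π * σ)⁻¹ * L < (K : ℝ) + 1 := by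
      rw [hKdef, KAna, ← hLdef]
      exact Nat.lt_floor_add_one _
    have hLexp : L = 2 * π * σ * ((2 * π * σ)⁻¹ * L) := by field_simp
    -- 2πσK ≤ L, hence cAna bound on shell
    have h2πσK : 2 * π * σ * (K : ℝ) ≤ L := by
      rw [hLexp]
      nlinarith [hKle]
    have hcbound : ∀ k ∈ shell K, cAna σ k ≤ r⁻¹ := by
      intro k hk
      have habs : |(k : ℝ)| ≤ K := abs_le_of_mem_shell hk
      have : 2 * π * σ * |(k : ℝ)| ≤ L := by nlinarith
      calc cAna σ k ≤ Real.exp L := Real.exp_le_exp.mpr this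
      _ = r⁻¹ := by rw [hLdef, Real.log_div one_ne_zero (ne_of_gt hr), Real.log_one,
            zero_sub, ← Real.log_inv, Real.exp_log (by positivity)]
    -- the sequence
    set f : ℤ → ℝ := fun k => if k ∈ shell K then v else 0 with hfdef
    have hfz : ∀ k ∉ shell K, f k = 0 := fun k hk => by simp [hfdef, hk]
    have hfv : ∀ k ∈ shell K, f k = v := fun k hk => by simp [hfdef, hk]
    have h2K : (0 : ℝ) < 2 * K := by positivity
    have hv2 : v ^ 2 = r ^ 2 / (2 * K) := by
      rw [hvdef, div_pow, Real.sq_sqrt h2K.le]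
    have hv4 : v ^ 4 = r ^ 4 / (2 * K) ^ 2 := by
      have : v ^ 4 = (v ^ 2) ^ 2 := by ring
      rw [this, hv2, div_pow]; norm_num [← pow_mul]
    -- sums
    have hsq : ∑' k : ℤ, (f k) ^ 2 = r ^ 2 := by
      rw [tsum_eq_sum (s := shell K) (fun k hk => by rw [hfz k hk]; ring),
        Finset.sum_congr rfl (fun k hk => by rw [hfv k hk]),
        Finset.sum_const, shell_card, nsmul_eq_mul, hv2]
      push_cast
      field_simp
    have hquart : ∑' k : ℤ, (f k) ^ 4 = r ^ 4 / (2 * K) := by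
      rw [tsum_eq_sum (s := shell K) (fun k hk => by rw [hfz k hk]; ring),
        Finset.sum_congr rfl (fun k hk => by rw [hfv k hk]),
        Finset.sum_const, shell_card, nsmul_eq_mul, hv4]
      push_cast
      field_simp
    have hTheta : f ∈ Theta (cAna σ) r := by
      refine ⟨summable_of_ne_finset_zero (s := shell K)
          (fun k hk => by rw [hfz k hk]; ring), ?_,
        summable_of_ne_finset_zero (s := shell K)
          (fun k hk => by rw [hfz k hk]; ring), hsq.ge⟩
      rw [tsum_eq_sum (s := shell K) (fun k hk => by rw [hfz k hk]; ring)]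
      have hle : ∀ k ∈ shell K, cAna σ k ^ 2 * (f k) ^ 2 ≤ r⁻¹ ^ 2 * v ^ 2 := by
        intro k hk
        rw [hfv k hk]
        have hc0 : 0 ≤ cAna σ k := (Real.exp_pos _).le
        have := pow_le_pow_left₀ hc0 (hcbound k hk) 2
        exact mul_le_mul_of_nonneg_right this (by positivity)
      calc ∑ k ∈ shell K, cAna σ k ^ 2 * (f k) ^ 2
          ≤ ∑ _k ∈ shell K, r⁻¹ ^ 2 * v ^ 2 := Finset.sum_le_sum hle
      _ = 2 * K * (r⁻¹ ^ 2 * v ^ 2) := by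
          rw [Finset.sum_const, shell_card, nsmul_eq_mul]; push_cast; ring
      _ = 1 := by rw [hv2]; field_simp
    -- vVal bound
    have hqmem : r ^ 4 / (2 * K) ∈ quartSet (cAna σ) r := ⟨f, hTheta, hquart⟩
    have hlb : ∀ y ∈ quartSet (cAna σ) r, (0 : ℝ) ≤ y := by
      rintro y ⟨θ, -, rfl⟩
      exact tsum_nonneg fun k => by positivity
    have hInf_le : sInf (quartSet (cAna σ) r) ≤ r ^ 4 / (2 * K) :=
      csInf_le ⟨0, hlb⟩ hqmem
    have hInf_nonneg : 0 ≤ sInf (quartSet (cAna σ) r) :=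
      le_csInf ⟨_, hqmem⟩ hlb
    have hvv : vVal (cAna σ) r ^ 2 = 2⁻¹ * sInf (quartSet (cAna σ) r) :=
      Real.sq_sqrt (by linarith)
    have hvb : vVal (cAna σ) r ^ 2 ≤ r ^ 4 / (4 * K) := by
      rw [hvv]
      calc 2⁻¹ * sInf (quartSet (cAna σ) r) ≤ 2⁻¹ * (r ^ 4 / (2 * K)) := by linarith
      _ = r ^ 4 / (4 * K) := by field_simp; ring
    refine ⟨⟨hTheta, hsq, hquart, hvb⟩, ?_⟩
    -- L ≤ 4πσK
    have hL4K : L ≤ 4 * π * σ * K := by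
      rw [hLexp]
      nlinarith [hKge]
    calc vVal (cAna σ) r ^ 2 ≤ r ^ 4 / (4 * K) := hvb
    _ ≤ (π * σ) * (r ^ 4 / L) := by
        rw [mul_div_assoc', div_le_div_iff₀ (by positivity) hL0]
        nlinarith [pow_pos hr 4, pow_nonneg hr.le 4]
  exact ⟨r₀, Real.exp_pos _, fun r hr hrr => (main r hr hrr).1,
    π * σ, by positivity, fun r hr hrr => (main r hr hrr).2⟩
end

section
/- (Lower-tail exponential bound under the null.) For each ε ∈ (0,1) let F_ε be a finite index set and (ω_{ε,k})_{k∈F_ε} positive weights with Σ_{k∈F_ε} ω_{ε,k}² = 1/2, let (ξ_k)_{k∈F_ε} be i.i.d. standard normal, and set t_ε = Σ_{k∈F_ε} ω_{ε,k}(ξ_k² − 1). Let T_ε → −∞ with T_ε · max_{k∈F_ε} ω_{ε,k} → 0 as ε → 0. Then P(t_ε ≤ T_ε) ≤ exp(−(T_ε²/2)(1+o(1))) as ε → 0; equivalently, limsup_{ε→0} T_ε^{−2} log P(t_ε ≤ T_ε) ≤ −1/2. -/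
open MeasureTheory ProbabilityTheory Filter Real Set
open scoped Topology

/-! Chernoff's bound with the moment generating function
`E exp (s (ξ² - 1)) = exp (-s) / √(1 - 2s) ≤ exp (s²)` for `s ≤ 0` gives
`P(t ≤ T) ≤ exp (-T² / (4 Σ ω²)) = exp (-T² / 2)` for every `T ≤ 0`, with no `o(1)` loss.
The condition `T · max ω → 0` only serves to make the probability positive, so that its logarithm
is not the junk value `log 0 = 0`: it forces `Σ ω > |T|`, and then the open set `{t < T}` contains
the origin. -/

theorem mgf_sq_sub_one_gaussianReal {s : ℝ} (hs : s < 1 / 2) :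
    mgf (fun y ↦ y ^ 2 - 1) (gaussianReal 0 1) s = exp (-s) / √(1 - 2 * s) := by
  have hintegrand : ∀ y : ℝ, gaussianPDFReal 0 1 y • exp (s * (y ^ 2 - 1))
      = (√(2 * π))⁻¹ * exp (-s) * exp (-(1 / 2 - s) * y ^ 2) := by
    intro y
    simp only [gaussianPDFReal, smul_eq_mul, NNReal.coe_one, mul_one, sub_zero]
    rw [mul_assoc, ← exp_add, mul_assoc, ← exp_add]
    ring_nf
  have hsqrt : √(π / (1 / 2 - s)) = √(2 * π) / √(1 - 2 * s) := by
    rw [← sqrt_div' _ (by linarith)]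
    congr 1
    field_simp
  rw [mgf, integral_gaussianReal_eq_integral_smul one_ne_zero]
  simp_rw [hintegrand]
  rw [integral_const_mul, integral_gaussian, hsqrt]
  have : 0 < √(2 * π) := by positivity
  field_simp

theorem mgf_sq_sub_one_gaussianReal_le_exp {s : ℝ} (hs : s ≤ 0) :
    mgf (fun y ↦ y ^ 2 - 1) (gaussianReal 0 1) s ≤ exp (s ^ 2) := by
  have hpos : 0 < 1 - 2 * s := by linarith
  have hlog : -2 * s - 2 * s ^ 2 ≤ log (1 - 2 * s) := by
    have h := le_log_one_add_of_nonneg (x := -2 * s) (by linarith)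
    rw [neg_mul, ← sub_eq_add_neg] at h
    refine le_trans ?_ h
    rw [le_div_iff₀ (by linarith)]
    nlinarith [pow_two_nonneg s, mul_nonpos_of_nonneg_of_nonpos (pow_two_nonneg s) hs]
  rw [mgf_sq_sub_one_gaussianReal (by linarith), ← exp_log hpos, ← exp_half, ← exp_sub]
  exact exp_le_exp.mpr (by linarith)

def weightedChiSq {κ : Type*} [Fintype κ] (w x : κ → ℝ) : ℝ := ∑ k, w k * (x k ^ 2 - 1)

section WeightedChiSq

variable {κ : Type*} [Fintype κ] (w : κ → ℝ)

theorem continuous_weightedChiSq : Continuous (weightedChiSq w) := by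
  unfold weightedChiSq; fun_prop

theorem neg_sum_le_weightedChiSq (hw : ∀ k, 0 ≤ w k) (x : κ → ℝ) :
    -∑ k, w k ≤ weightedChiSq w x := by
  rw [weightedChiSq, ← Finset.sum_neg_distrib]
  gcongr with k
  nlinarith [hw k, sq_nonneg (x k)]

theorem mgf_weightedChiSq (s : ℝ) :
    mgf (weightedChiSq w) (Measure.pi fun _ : κ ↦ gaussianReal 0 1) s
      = ∏ k, mgf (fun y ↦ y ^ 2 - 1) (gaussianReal 0 1) (w k * s) := by
  simp only [mgf, weightedChiSq, Finset.mul_sum, exp_sum]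
  simp_rw [mul_left_comm s, ← mul_assoc]
  exact integral_fintype_prod_eq_prod fun k y ↦ exp (w k * s * (y ^ 2 - 1))

theorem mgf_weightedChiSq_le (hw : ∀ k, 0 ≤ w k) {s : ℝ} (hs : s ≤ 0) :
    mgf (weightedChiSq w) (Measure.pi fun _ : κ ↦ gaussianReal 0 1) s
      ≤ exp (s ^ 2 * ∑ k, w k ^ 2) := by
  calc mgf (weightedChiSq w) (Measure.pi fun _ : κ ↦ gaussianReal 0 1) s
      = ∏ k, mgf (fun y ↦ y ^ 2 - 1) (gaussianReal 0 1) (w k * s) := mgf_weightedChiSq w s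
    _ ≤ ∏ k, exp ((w k * s) ^ 2) := by
      gcongr with k
      · exact fun _ _ ↦ mgf_nonneg
      · exact mgf_sq_sub_one_gaussianReal_le_exp (mul_nonpos_of_nonneg_of_nonpos (hw k) hs)
    _ = exp (s ^ 2 * ∑ k, w k ^ 2) := by
      rw [← exp_sum, Finset.mul_sum]
      exact congrArg exp (Finset.sum_congr rfl fun k _ ↦ by ring)

theorem measureReal_weightedChiSq_le_le (hw : ∀ k, 0 ≤ w k) {t : ℝ} (ht : t ≤ 0) :
    (Measure.pi fun _ : κ ↦ gaussianReal 0 1).real {x | weightedChiSq w x ≤ t}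
      ≤ exp (-t ^ 2 / (4 * ∑ k, w k ^ 2)) := by
  set S := ∑ k, w k ^ 2
  -- the minimiser of `-s t + s² S`
  set s := t / (2 * S)
  have hs : s ≤ 0 := div_nonpos_of_nonpos_of_nonneg ht (by positivity)
  have hint : Integrable (fun x ↦ exp (s * weightedChiSq w x))
      (Measure.pi fun _ : κ ↦ gaussianReal 0 1) := by
    refine Integrable.of_bound (C := exp (-s * ∑ k, w k))
      ((continuous_weightedChiSq w).const_mul s).rexp.aestronglyMeasurable (ae_of_all _ fun x ↦ ?_)
    rw [norm_eq_abs, abs_exp, exp_le_exp, neg_mul, ← mul_neg]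
    exact mul_le_mul_of_nonpos_left (neg_sum_le_weightedChiSq w hw x) hs
  calc (Measure.pi fun _ : κ ↦ gaussianReal 0 1).real {x | weightedChiSq w x ≤ t}
      ≤ exp (-s * t) * mgf (weightedChiSq w) (Measure.pi fun _ : κ ↦ gaussianReal 0 1) s :=
        measure_le_le_exp_mul_mgf t hs hint
    _ ≤ exp (-s * t) * exp (s ^ 2 * S) := by gcongr; exact mgf_weightedChiSq_le w hw hs
    _ = exp (-t ^ 2 / (4 * S)) := by
      rw [← exp_add]
      congr 1
      rcases eq_or_ne S 0 with hS | hS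
      · simp [s, hS]
      · simp only [s]; field_simp; ring

theorem measureReal_weightedChiSq_le_pos {t : ℝ} (ht : -∑ k, w k < t) :
    0 < (Measure.pi fun _ : κ ↦ gaussianReal 0 1).real {x | weightedChiSq w x ≤ t} := by
  have : (gaussianReal 0 1).IsOpenPosMeasure :=
    (gaussianReal_absolutelyContinuous' 0 one_ne_zero).isOpenPosMeasure
  have hopen : IsOpen {x | weightedChiSq w x < t} :=
    isOpen_lt (continuous_weightedChiSq w) continuous_const
  have hzero : weightedChiSq w 0 < t := by simpa [weightedChiSq] using ht
  refine ENNReal.toReal_pos (ne_of_gt ?_) (measure_ne_top _ _)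
  exact (hopen.measure_pos _ ⟨0, hzero⟩).trans_le (measure_mono fun x (hx : _ < t) ↦ hx.le)

theorem log_measureReal_weightedChiSq_le_le (hw : ∀ k, 0 ≤ w k) {t : ℝ} (ht : t ≤ 0)
    (hsum : -∑ k, w k < t) :
    log ((Measure.pi fun _ : κ ↦ gaussianReal 0 1).real {x | weightedChiSq w x ≤ t})
      ≤ -t ^ 2 / (4 * ∑ k, w k ^ 2) :=
  (log_le_log (measureReal_weightedChiSq_le_pos w hsum)
    (measureReal_weightedChiSq_le_le w hw ht)).trans_eq (log_exp _)

theorem mul_sum_sq_le_mul_sum (hw : ∀ k, 0 ≤ w k) {a c : ℝ} (h : ∀ k, a * w k ≤ c) :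
    a * ∑ k, w k ^ 2 ≤ c * ∑ k, w k := by
  simp_rw [Finset.mul_sum, sq, ← mul_assoc]
  exact Finset.sum_le_sum fun k _ ↦ mul_le_mul_of_nonneg_right (h k) (hw k)

end WeightedChiSq

/-- Lower-tail exponential bound under the null: for
`t_ε = Σ_{k∈F_ε} ω_{ε,k}(ξ_k² − 1)` with i.i.d. standard normal `ξ_k`, weights normalized
by `Σ ω² = 1/2`, and `T_ε → −∞` with `T_ε · max_k ω_{ε,k} → 0`, one has
`P(t_ε ≤ T_ε) ≤ exp(−(T_ε²/2)(1+o(1)))`, i.e. `limsup T_ε⁻² log P(t_ε ≤ T_ε) ≤ −1/2`. -/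
theorem lower_tail_bound_null
    (ι : Type*) (F : ℝ → Finset ι) (ω : ℝ → ι → ℝ)
    (hωpos : ∀ᶠ ε in 𝓝[>] (0 : ℝ), ∀ k ∈ F ε, 0 < ω ε k)
    (hωnorm : ∀ᶠ ε in 𝓝[>] (0 : ℝ), ∑ k ∈ F ε, (ω ε k) ^ 2 = 1 / 2)
    (T : ℝ → ℝ) (hT : Tendsto T (𝓝[>] (0 : ℝ)) atBot)
    (hTω : ∀ κ > (0 : ℝ), ∀ᶠ ε in 𝓝[>] (0 : ℝ), ∀ k ∈ F ε, |T ε| * ω ε k < κ) :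
    ∀ b : ℝ, -(1 / 2 : ℝ) < b → ∀ᶠ ε in 𝓝[>] (0 : ℝ),
      Real.log (((Measure.pi fun _ : (F ε : Finset ι) => gaussianReal 0 1)
          {x | (∑ k : (F ε : Finset ι), ω ε k * ((x k) ^ 2 - 1)) ≤ T ε}).toReal)
        ≤ b * (T ε) ^ 2 := by
  intro b hb
  filter_upwards [hωpos, hωnorm, hT.eventually (eventually_lt_atBot 0), hTω (1 / 4) (by norm_num)]
    with ε hpos hnorm hneg hsmall
  set w : F ε → ℝ := fun k ↦ ω ε k
  have hw : ∀ k, 0 ≤ w k := fun k ↦ (hpos k k.2).le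
  have hS : ∑ k, w k ^ 2 = 1 / 2 := (Finset.sum_coe_sort (F ε) _).trans hnorm
  have hsum : -∑ k, w k < T ε := by
    have := mul_sum_sq_le_mul_sum w hw fun k ↦ (hsmall k k.2).le
    rw [hS, abs_of_neg hneg] at this
    linarith
  calc _ ≤ -T ε ^ 2 / (4 * ∑ k, w k ^ 2) :=
        log_measureReal_weightedChiSq_le_le w hw hneg.le hsum
    _ ≤ b * T ε ^ 2 := by
        rw [hS]
        nlinarith [sq_nonneg (T ε)]
end
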